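/- Let 0 < α < 1, L ∈ C²([a,b] × ℝ²), and suppose y ∈ C¹([a,b]) satisfies, for some constant K and all x ∈ [a,b), the integral Euler–Lagrange equation (xJ^α_b ∂L/∂y)(x) + (∂L/∂(ᶜaD^α y))(x) = K (b-x)^{α-1}, where the left-hand side extends continuously to x = b. Then K = 0 and (∂L/∂(ᶜaD^α y)) evaluated at x = b equals 0. -/

import Mathlib

open MeasureTheory intervalIntegral Real Set

/-- The left Caputo fractional derivative of order `α ∈ (0,1)`. -/
noncomputable def leftCaputo (α a : ℝ) (y : ℝ → ℝ) (x : ℝ) : ℝ :=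
  (1 / Real.Gamma (1 - α)) * ∫ u in a..x, deriv y u * (x - u) ^ (-α)

/-- The right Riemann–Liouville fractional integral of order `α` with base point `b`. -/
noncomputable def rightRL (α b : ℝ) (g : ℝ → ℝ) (x : ℝ) : ℝ :=
  (1 / Real.Gamma α) * ∫ u in x..b, g u * (u - x) ^ (α - 1)

/- Since `(b - x) ^ (α - 1) → ∞` as `x → b⁻` while the left-hand side `G` has a finite limit
there, the constant `K` must vanish; then `G = 0` on `[a, b)`, so its limit `G b` is `0` too. -/

open Filter Topology

theorem tendsto_sub_rpow_nhdsLT_atTop (b : ℝ) {β : ℝ} (hβ : β < 0) :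
    Tendsto (fun x : ℝ => (b - x) ^ β) (𝓝[<] b) atTop := by
  have hsub : Tendsto (fun x : ℝ => b - x) (𝓝[<] b) (𝓝[>] 0) := by
    refine tendsto_nhdsWithin_of_tendsto_nhds_of_eventually_within _ ?_ ?_
    · have : Tendsto (fun x : ℝ => b - x) (𝓝 b) (𝓝 (b - b)) := tendsto_const_nhds.sub tendsto_id
      simpa using this.mono_left nhdsWithin_le_nhds
    · filter_upwards [self_mem_nhdsWithin] with x (hx : x < b)
      exact sub_pos.2 hx
  exact (tendsto_rpow_neg_nhdsGT_zero hβ).comp hsub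

theorem eq_zero_of_tendsto_const_mul_of_tendsto_atTop {ι : Type*} {l : Filter ι} [l.NeBot]
    {φ : ι → ℝ} (hφ : Tendsto φ l atTop) {K c : ℝ}
    (h : Tendsto (fun x => K * φ x) l (𝓝 c)) : K = 0 := by
  by_contra hK
  rcases lt_or_gt_of_ne hK with hneg | hpos
  · exact not_tendsto_nhds_of_tendsto_atBot (hφ.const_mul_atTop_of_neg hneg) c h
  · exact not_tendsto_nhds_of_tendsto_atTop (hφ.const_mul_atTop hpos) c h

theorem eq_zero_and_eq_zero_of_eventuallyEq_const_mul {ι : Type*} {l : Filter ι} [l.NeBot]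
    {φ : ι → ℝ} (hφ : Tendsto φ l atTop) {G : ι → ℝ} {K c : ℝ}
    (hG : Tendsto G l (𝓝 c)) (hGφ : G =ᶠ[l] fun x => K * φ x) : K = 0 ∧ c = 0 := by
  have hK : K = 0 := eq_zero_of_tendsto_const_mul_of_tendsto_atTop hφ (hG.congr' hGφ)
  refine ⟨hK, tendsto_nhds_unique hG (tendsto_const_nhds.congr' ?_)⟩
  simpa [hK] using hGφ.symm

theorem eulerLagrange_natural_boundary_general
    (α a b : ℝ) (hα₁ : α < 1) (hab : a < b)
    (L : ℝ → ℝ → ℝ → ℝ)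
    (y : ℝ → ℝ)
    (K : ℝ) (G : ℝ → ℝ)
    (hGb : G b = deriv (fun w => L b (y b) w) (leftCaputo α a y b))
    (hGcont : ContinuousOn G (Set.Icc a b))
    (hEL : ∀ x ∈ Set.Ico a b, G x = K * (b - x) ^ (α - 1)) :
    K = 0 ∧ deriv (fun w => L b (y b) w) (leftCaputo α a y b) = 0 := by
  have hIco : Ico a b ∈ 𝓝[<] b := Ico_mem_nhdsLT hab
  have hGlim : Tendsto G (𝓝[<] b) (𝓝 (G b)) :=
    (hGcont b (right_mem_Icc.2 hab.le)).mono_of_mem_nhdsWithin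
      (mem_of_superset hIco Ico_subset_Icc_self)
  obtain ⟨hK, hGb0⟩ := eq_zero_and_eq_zero_of_eventuallyEq_const_mul
    (tendsto_sub_rpow_nhdsLT_atTop b (sub_neg.2 hα₁)) hGlim (eventually_of_mem hIco hEL)
  exact ⟨hK, hGb ▸ hGb0⟩

/-- If the left-hand side of the integral Euler–Lagrange equation extends
continuously to `x = b`, then the constant `K` vanishes and the natural boundary
condition `∂L/∂(ᶜaD^α y)|_{x=b} = 0` holds. -/
theorem eulerLagrange_natural_boundary
    (α a b : ℝ) (hα₀ : 0 < α) (hα₁ : α < 1) (hab : a < b)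
    (L : ℝ → ℝ → ℝ → ℝ)
    (hL : ContDiffOn ℝ 2 (fun p : ℝ × ℝ × ℝ => L p.1 p.2.1 p.2.2)
      (Set.Icc a b ×ˢ (Set.univ : Set (ℝ × ℝ))))
    (y : ℝ → ℝ) (hy : ContDiffOn ℝ 1 y (Set.Icc a b))
    (K : ℝ) (G : ℝ → ℝ)
    (hG : ∀ x ∈ Set.Ico a b,
      G x = rightRL α b (fun u => deriv (fun v => L u v (leftCaputo α a y u)) (y u)) x
        + deriv (fun w => L x (y x) w) (leftCaputo α a y x))
    (hGb : G b = deriv (fun w => L b (y b) w) (leftCaputo α a y b))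
    (hGcont : ContinuousOn G (Set.Icc a b))
    (hEL : ∀ x ∈ Set.Ico a b, G x = K * (b - x) ^ (α - 1)) :
    K = 0 ∧ deriv (fun w => L b (y b) w) (leftCaputo α a y b) = 0 :=
  eulerLagrange_natural_boundary_general α a b hα₁ hab L y K G hGb hGcont hEL
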